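/- (Required subsample size.) If the subsample size satisfies n_s ≥ α (log n + log K), where α = −(log(1 − n_min/n))^{-1}, then the event e* (every one of the K latent clusters has at least one merchant in the subsample) happens with probability at least 1 − n^{-1}. -/

import Mathlib

open Finset

/-- Probability, under simple random sampling without replacement of a size-`ns` subset of
the `n` merchants (uniform over all such subsets), of an event `E` about the sampled set. -/
noncomputable def srsProb (n ns : ℕ) (E : Finset (Fin n) → Prop) : ℝ :=
  ((@Finset.filter _ (fun s => E s) (Classical.decPred _)
      (Finset.powersetCard ns (Finset.univ : Finset (Fin n)))).card : ℝ) /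
    ((Finset.powersetCard ns (Finset.univ : Finset (Fin n))).card : ℝ)

/-- Size of cluster `k` among the `n` merchants with labels `γ`. -/
noncomputable def clusterSize {n K : ℕ} (γ : Fin n → Fin K) (k : Fin K) : ℕ :=
  (Finset.univ.filter fun i => γ i = k).card

/-- Minimal cluster size `n_min = min_k n*_k`. -/
noncomputable def nMin {n K : ℕ} (γ : Fin n → Fin K) : ℕ := ⨅ k, clusterSize γ k

/-! A size-`n_s` subsample misses cluster `k` with probability
`C(n - n*_k, n_s) / C(n, n_s) ≤ (1 - n*_k/n)^{n_s} ≤ (1 - n_min/n)^{n_s}`, because the falling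
factorials compare factor by factor: `(n - n*_k - i) n ≤ (n - i)(n - n*_k)`. A union bound over the
`K` clusters bounds the probability that `e*` fails by `K (1 - n_min/n)^{n_s}`, and the size
condition amounts to `(1 - n_min/n)^{n_s} ≤ (n K)⁻¹`. -/

theorem Nat.choose_mul_pow_le_choose_mul_pow {a b : ℕ} (hab : a ≤ b) (k : ℕ) :
    a.choose k * b ^ k ≤ b.choose k * a ^ k := by
  have hdesc : a.descFactorial k * b ^ k ≤ b.descFactorial k * a ^ k := by
    have hpow (c : ℕ) : c ^ k = ∏ _i ∈ range k, c := by simp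
    rw [Nat.descFactorial_eq_prod_range, Nat.descFactorial_eq_prod_range, hpow a, hpow b,
      ← prod_mul_distrib, ← prod_mul_distrib]
    refine prod_le_prod' fun i _ => ?_
    rcases le_or_gt i a with hia | hai
    · zify [hia, hia.trans hab]
      nlinarith [(Int.ofNat_le.mpr hab), Int.natCast_nonneg i]
    · simp [Nat.sub_eq_zero_of_le hai.le]
  rw [Nat.descFactorial_eq_factorial_mul_choose, Nat.descFactorial_eq_factorial_mul_choose,
    Nat.mul_assoc, Nat.mul_assoc] at hdesc
  exact Nat.le_of_mul_le_mul_left hdesc k.factorial_pos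

theorem Nat.cast_choose_div_cast_choose_le {a b : ℕ} (hab : a ≤ b) (k : ℕ) :
    (a.choose k : ℝ) / b.choose k ≤ ((a : ℝ) / b) ^ k := by
  rcases b.eq_zero_or_pos with rfl | hb
  · obtain rfl : a = 0 := Nat.le_zero.mp hab
    rcases k with _ | k <;> simp
  rcases (b.choose k).eq_zero_or_pos with hzero | hpos
  · rw [hzero, Nat.cast_zero, div_zero]
    positivity
  rw [div_pow, div_le_div_iff₀ (by exact_mod_cast hpos) (by positivity), mul_comm ((a : ℝ) ^ k)]
  exact_mod_cast Nat.choose_mul_pow_le_choose_mul_pow hab k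

section srsProb

variable {n ns : ℕ}

theorem srsProb_eq_card_div (E : Finset (Fin n) → Prop) [DecidablePred E] :
    srsProb n ns E = #{s ∈ powersetCard ns univ | E s} / n.choose ns := by
  rw [srsProb, card_powersetCard, card_univ, Fintype.card_fin]
  congr

theorem srsProb_add_srsProb_not (E : Finset (Fin n) → Prop) (hns : ns ≤ n) :
    srsProb n ns E + srsProb n ns (fun s => ¬ E s) = 1 := by
  classical
  have hpos : (0 : ℝ) < n.choose ns := by exact_mod_cast Nat.choose_pos hns
  rw [srsProb_eq_card_div, srsProb_eq_card_div, ← add_div, div_eq_one_iff_eq hpos.ne',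
    ← Nat.cast_add, card_filter_add_card_filter_not, card_powersetCard, card_univ,
    Fintype.card_fin]

theorem srsProb_exists_le {ι : Type*} [Fintype ι] (P : ι → Finset (Fin n) → Prop) :
    srsProb n ns (fun s => ∃ k, P k s) ≤ ∑ k, srsProb n ns (P k) := by
  classical
  simp only [srsProb_eq_card_div, ← sum_div]
  gcongr
  calc (#{s ∈ powersetCard ns univ | ∃ k, P k s} : ℝ)
      ≤ #(univ.biUnion fun k => {s ∈ powersetCard ns univ | P k s}) := by
        gcongr
        intro s
        simp
    _ ≤ _ := by exact_mod_cast card_biUnion_le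

theorem srsProb_forall_not (p : Fin n → Prop) [DecidablePred p] :
    srsProb n ns (fun s => ∀ i ∈ s, ¬ p i) =
      ((n - #(univ.filter p)).choose ns : ℝ) / n.choose ns := by
  have hfilter : {s ∈ powersetCard ns (univ : Finset (Fin n)) | ∀ i ∈ s, ¬ p i} =
      powersetCard ns {i | ¬ p i} := by
    ext s
    simp [subset_iff, and_comm]
  rw [srsProb_eq_card_div, hfilter, card_powersetCard, filter_not,
    card_sdiff_of_subset (filter_subset _ _), card_univ, Fintype.card_fin]

theorem srsProb_forall_not_le {m : ℕ} (p : Fin n → Prop) [DecidablePred p]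
    (hm : m ≤ #(univ.filter p)) :
    srsProb n ns (fun s => ∀ i ∈ s, ¬ p i) ≤ (((n - m : ℕ) : ℝ) / n) ^ ns := by
  rw [srsProb_forall_not]
  calc ((n - #(univ.filter p)).choose ns : ℝ) / n.choose ns
      ≤ (((n - #(univ.filter p) : ℕ) : ℝ) / n) ^ ns :=
        Nat.cast_choose_div_cast_choose_le (Nat.sub_le _ _) ns
    _ ≤ (((n - m : ℕ) : ℝ) / n) ^ ns := by gcongr

end srsProb

theorem pow_le_inv_of_neg_inv_log_mul_log_le {x c : ℝ} (hx0 : 0 < x) (hx1 : x < 1) (hc : 0 < c)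
    {k : ℕ} (h : -(Real.log x)⁻¹ * Real.log c ≤ k) : x ^ k ≤ c⁻¹ := by
  have hlog : 0 < -Real.log x := neg_pos.mpr (Real.log_neg hx0 hx1)
  rw [← inv_neg, inv_mul_le_iff₀ hlog] at h
  rw [← Real.log_le_log_iff (by positivity) (by positivity), Real.log_pow, Real.log_inv]
  linarith

section cluster

variable {n K : ℕ} (γ : Fin n → Fin K)

theorem nMin_le_clusterSize (k : Fin K) : nMin γ ≤ clusterSize γ k :=
  ciInf_le (OrderBot.bddBelow _) k

theorem nMin_pos [Nonempty (Fin K)] (hγ : Function.Surjective γ) : 0 < nMin γ := by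
  refine le_ciInf (f := clusterSize γ) fun k => ?_
  obtain ⟨i, rfl⟩ := hγ k
  exact card_pos.mpr ⟨i, mem_filter.mpr ⟨mem_univ _, rfl⟩⟩

end cluster

theorem srs_cover_prob_required_size_general {n K ns : ℕ} (hns : ns ≤ n)
    (γ : Fin n → Fin K) (hsurj : Function.Surjective γ)
    (hmin : nMin γ < n)
    (hsize : -(Real.log (1 - (nMin γ : ℝ) / (n : ℝ)))⁻¹ *
        (Real.log (n : ℝ) + Real.log (K : ℝ)) ≤ (ns : ℝ)) :
    1 - (n : ℝ)⁻¹ ≤ srsProb n ns (fun s => ∀ k : Fin K, ∃ i ∈ s, γ i = k) := by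
  have hn : 0 < n := (Nat.zero_le _).trans_lt hmin
  have : Nonempty (Fin K) := ⟨γ ⟨0, hn⟩⟩
  have hK : (0 : ℝ) < K := by exact_mod_cast Fin.pos_iff_nonempty.mpr this
  set x : ℝ := ((n - nMin γ : ℕ) : ℝ) / n with hx
  have hx0 : 0 < x := div_pos (by exact_mod_cast Nat.sub_pos_of_lt hmin) (by exact_mod_cast hn)
  have hx1 : x < 1 :=
    (div_lt_one (by exact_mod_cast hn)).mpr (by exact_mod_cast Nat.sub_lt hn (nMin_pos γ hsurj))
  have hxpow : x ^ ns ≤ ((n : ℝ) * K)⁻¹ := by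
    refine pow_le_inv_of_neg_inv_log_mul_log_le hx0 hx1 (by positivity) ?_
    rwa [Real.log_mul (by positivity) hK.ne', hx, Nat.cast_sub hmin.le, sub_div,
      div_self (by positivity)]
  have hmiss : srsProb n ns (fun s => ¬ ∀ k : Fin K, ∃ i ∈ s, γ i = k) ≤ (n : ℝ)⁻¹ :=
    calc _ = srsProb n ns (fun s => ∃ k, ∀ i ∈ s, ¬ γ i = k) := by
          simp only [not_forall, not_exists, not_and]
      _ ≤ ∑ k, srsProb n ns (fun s => ∀ i ∈ s, ¬ γ i = k) := srsProb_exists_le _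
      _ ≤ ∑ _k : Fin K, x ^ ns :=
          sum_le_sum fun k _ => srsProb_forall_not_le _ (nMin_le_clusterSize γ k)
      _ = K * x ^ ns := by simp
      _ ≤ K * ((n : ℝ) * K)⁻¹ := by gcongr
      _ = (n : ℝ)⁻¹ := by field_simp
  linarith [srsProb_add_srsProb_not (fun s => ∀ k : Fin K, ∃ i ∈ s, γ i = k) hns]

/-- required subsample size: if the subsample size satisfies
`n_s ≥ α (log n + log K)` with `α = −(log(1 − n_min/n))⁻¹`, then the event `e*`
(every one of the `K` clusters has at least one merchant in the subsample) happens with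
probability at least `1 − n⁻¹` under simple random sampling without replacement. -/
theorem srs_cover_prob_required_size {n K ns : ℕ} (hK : 0 < K) (hns : ns ≤ n)
    (γ : Fin n → Fin K) (hsurj : Function.Surjective γ)
    (hmin : nMin γ < n)
    (hsize : -(Real.log (1 - (nMin γ : ℝ) / (n : ℝ)))⁻¹ *
        (Real.log (n : ℝ) + Real.log (K : ℝ)) ≤ (ns : ℝ)) :
    1 - (n : ℝ)⁻¹ ≤ srsProb n ns (fun s => ∀ k : Fin K, ∃ i ∈ s, γ i = k) :=
  srs_cover_prob_required_size_general hns γ hsurj hmin hsize
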